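/- Let A, B be N×M real matrices with ‖A - B‖ ≤ ω d, singular values of A and B bounded below by Σ_min > 0, and let A⁺, B⁺ denote Moore–Penrose pseudoinverses. Then ‖A⁺ - B⁺‖ ≤ √2 · ‖A⁺‖ · ‖B⁺‖ · ‖A - B‖ ≤ √2 ω d / Σ_min². -/

import Mathlib

/-!
Write `P = A⁺`, `Q = B⁺` and `Π = AA⁺`, the orthogonal projection onto the range of `A`.
From `QB = 1`, `QQᵀBᵀ = Q` and `Aᵀ(1 - Π) = 0` one gets
`Q - P = Q(A - B)P · Π + QQᵀ(B - A)ᵀ · (1 - Π)`.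
If `‖Q‖ ≤ ‖P‖` (the other case is symmetric), both coefficients have norm at most
`‖P‖‖Q‖‖A - B‖`, and by Pythagoras `‖Πx‖ + ‖(1 - Π)x‖ ≤ √2 ‖x‖`.
The second inequality is `‖A⁺‖ ≤ 1/Σ_min`, since `Σ_min ‖A⁺y‖ ≤ ‖AA⁺y‖ = ‖Πy‖ ≤ ‖y‖`.
-/

open Matrix

/-- Operator 2-norm of a real matrix, via the induced Euclidean linear map. -/
noncomputable def opNorm {m n : ℕ} (A : Matrix (Fin m) (Fin n) ℝ) : ℝ :=
  ‖LinearMap.toContinuousLinearMap (Matrix.toEuclideanLin A)‖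

/-- Moore–Penrose pseudoinverse of a full-column-rank matrix: `A⁺ = (AᵀA)⁻¹Aᵀ`. -/
noncomputable def pinv {m n : ℕ} (A : Matrix (Fin m) (Fin n) ℝ) :
    Matrix (Fin n) (Fin m) ℝ :=
  (Aᵀ * A)⁻¹ * Aᵀ

open scoped Matrix.Norms.L2Operator

namespace LinearMap

theorem injective_of_mul_norm_le {E F : Type*} [NormedAddCommGroup E] [NormedAddCommGroup F]
    [Module ℝ E] [Module ℝ F] (f : E →ₗ[ℝ] F) {c : ℝ} (hc : 0 < c)
    (h : ∀ x, c * ‖x‖ ≤ ‖f x‖) : Function.Injective f := by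
  refine (injective_iff_map_eq_zero f).mpr fun x hx => ?_
  have hcx := h x
  rw [hx, norm_zero] at hcx
  exact norm_le_zero_iff.mp (nonpos_of_mul_nonpos_right hcx hc)

namespace IsSymmetricProjection

variable {E : Type*} [NormedAddCommGroup E] [InnerProductSpace ℝ E] {T : E →ₗ[ℝ] E}

theorem norm_sq_add_norm_sub_sq (hT : T.IsSymmetricProjection) (x : E) :
    ‖T x‖ ^ 2 + ‖x - T x‖ ^ 2 = ‖x‖ ^ 2 := by
  obtain ⟨_, hT⟩ := isSymmetricProjection_iff_eq_coe_starProjection_range.mp hT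
  rw [hT, Submodule.norm_sq_eq_add_norm_sq_starProjection x (range T),
    Submodule.starProjection_orthogonal]
  rfl

theorem norm_apply_le (hT : T.IsSymmetricProjection) (x : E) : ‖T x‖ ≤ ‖x‖ := by
  have := hT.norm_sq_add_norm_sub_sq x
  exact le_of_sq_le_sq (by nlinarith [sq_nonneg ‖x - T x‖]) (norm_nonneg x)

theorem norm_add_norm_sub_le (hT : T.IsSymmetricProjection) (x : E) :
    ‖T x‖ + ‖x - T x‖ ≤ √2 * ‖x‖ := by
  rw [← Real.sqrt_sq (norm_nonneg x), ← Real.sqrt_mul zero_le_two,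
    ← hT.norm_sq_add_norm_sub_sq x]
  exact Real.le_sqrt_of_sq_le (by nlinarith [sq_nonneg (‖T x‖ - ‖x - T x‖)])

end IsSymmetricProjection

end LinearMap

namespace Matrix

theorem norm_toEuclideanLin_apply_le {m n : Type*} [Fintype m] [Fintype n] [DecidableEq n]
    (A : Matrix m n ℝ) (x : EuclideanSpace ℝ n) : ‖toEuclideanLin A x‖ ≤ ‖A‖ * ‖x‖ :=
  A.l2_opNorm_mulVec x

theorem l2_opNorm_le_bound {m n : Type*} [Fintype m] [Fintype n] [DecidableEq n]
    (A : Matrix m n ℝ) {c : ℝ} (hc : 0 ≤ c) (h : ∀ x, ‖toEuclideanLin A x‖ ≤ c * ‖x‖) :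
    ‖A‖ ≤ c :=
  ContinuousLinearMap.opNorm_le_bound _ hc h

theorem l2_opNorm_transpose {m n : Type*} [Fintype m] [Fintype n] [DecidableEq m] [DecidableEq n]
    (A : Matrix m n ℝ) : ‖Aᵀ‖ = ‖A‖ := by
  simpa using A.l2_opNorm_conjTranspose

theorem toEuclideanLin_mul_apply {l m n : Type*} [Fintype m] [Fintype n] [DecidableEq m]
    [DecidableEq n] (A : Matrix l m ℝ) (B : Matrix m n ℝ) (x : EuclideanSpace ℝ n) :
    toEuclideanLin (A * B) x = toEuclideanLin A (toEuclideanLin B x) := by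
  simp

theorem l2_opNorm_mul_add_mul_one_sub_le {l m : Type*} [Fintype l] [Fintype m] [DecidableEq m]
    {X Y : Matrix l m ℝ} {R : Matrix m m ℝ} (hR : (toEuclideanLin R).IsSymmetricProjection)
    {c : ℝ} (hX : ‖X‖ ≤ c) (hY : ‖Y‖ ≤ c) :
    ‖X * R + Y * (1 - R)‖ ≤ √2 * c := by
  have hc : 0 ≤ c := (norm_nonneg X).trans hX
  refine l2_opNorm_le_bound _ (by positivity) fun x => ?_
  set y := toEuclideanLin R x
  have h1R : toEuclideanLin (1 - R) x = x - y := by simp [y]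
  calc ‖toEuclideanLin (X * R + Y * (1 - R)) x‖ ≤ ‖X‖ * ‖y‖ + ‖Y‖ * ‖x - y‖ := by
        rw [map_add, LinearMap.add_apply, toEuclideanLin_mul_apply, toEuclideanLin_mul_apply, h1R]
        exact (norm_add_le _ _).trans
          (add_le_add (norm_toEuclideanLin_apply_le _ _) (norm_toEuclideanLin_apply_le _ _))
    _ ≤ c * (‖y‖ + ‖x - y‖) := by rw [mul_add]; gcongr
    _ ≤ c * (√2 * ‖x‖) := by gcongr; exact hR.norm_add_norm_sub_le x
    _ = √2 * c * ‖x‖ := by ring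

theorem isUnit_det_transpose_mul_self {m n : Type*} [Fintype m] [Fintype n] [DecidableEq n]
    {A : Matrix m n ℝ} (hA : Function.Injective (toEuclideanLin A)) : IsUnit (Aᵀ * A).det := by
  refine isUnit_iff_ne_zero.mpr fun hdet => ?_
  obtain ⟨v, hv, hAAv⟩ := exists_mulVec_eq_zero_iff.mpr hdet
  rw [← conjTranspose_eq_transpose_of_trivial, conjTranspose_mul_self_mulVec_eq_zero] at hAAv
  refine hv (WithLp.toLp_injective 2 (hA ?_))
  simp [toLpLin_apply, hAAv]

end Matrix

theorem opNorm_eq_l2_opNorm {m n : ℕ} (A : Matrix (Fin m) (Fin n) ℝ) : opNorm A = ‖A‖ := rfl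

section pinv

variable {m n : ℕ} {A B : Matrix (Fin m) (Fin n) ℝ}

theorem pinv_mul_self (hA : IsUnit (Aᵀ * A).det) : pinv A * A = 1 := by
  rw [pinv, Matrix.mul_assoc, nonsing_inv_mul _ hA]

theorem transpose_mul_pinv (A : Matrix (Fin m) (Fin n) ℝ) : (A * pinv A)ᵀ = A * pinv A := by
  rw [pinv, transpose_mul, transpose_mul, transpose_nonsing_inv, transpose_mul, transpose_transpose,
    Matrix.mul_assoc]

theorem pinv_mul_mul_pinv (hA : IsUnit (Aᵀ * A).det) : pinv A * (A * pinv A) = pinv A := by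
  rw [← Matrix.mul_assoc, pinv_mul_self hA, Matrix.one_mul]

theorem transpose_mul_mul_pinv (hA : IsUnit (Aᵀ * A).det) : Aᵀ * (A * pinv A) = Aᵀ := by
  rw [← transpose_mul_pinv, ← transpose_mul, Matrix.mul_assoc, pinv_mul_self hA, Matrix.mul_one]

theorem pinv_mul_transpose_mul_transpose (hA : IsUnit (Aᵀ * A).det) :
    pinv A * (pinv A)ᵀ * Aᵀ = pinv A := by
  rw [Matrix.mul_assoc, ← transpose_mul, transpose_mul_pinv, pinv_mul_mul_pinv hA]

theorem isSymmetricProjection_toEuclideanLin_mul_pinv (hA : IsUnit (Aᵀ * A).det) :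
    (toEuclideanLin (A * pinv A)).IsSymmetricProjection where
  isIdempotentElem := by
    change toLpLinAlgEquiv 2 _ * toLpLinAlgEquiv 2 _ = toLpLinAlgEquiv 2 _
    rw [← map_mul, Matrix.mul_assoc, pinv_mul_mul_pinv hA]
  isSymmetric := isSymmetric_toEuclideanLin_iff.mpr <| by
    rw [IsHermitian, conjTranspose_eq_transpose_of_trivial, transpose_mul_pinv]

theorem pinv_sub_pinv (hA : IsUnit (Aᵀ * A).det) (hB : IsUnit (Bᵀ * B).det) :
    pinv B - pinv A = pinv B * (A - B) * pinv A * (A * pinv A)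
      + pinv B * (pinv B)ᵀ * (B - A)ᵀ * (1 - A * pinv A) := by
  have hAP : Aᵀ * (1 - A * pinv A) = 0 := by
    rw [Matrix.mul_sub, Matrix.mul_one, transpose_mul_mul_pinv hA, sub_self]
  have h₁ : pinv B * (A - B) * pinv A * (A * pinv A) = pinv B * A * pinv A - pinv A := by
    rw [Matrix.mul_assoc _ (pinv A), pinv_mul_mul_pinv hA, Matrix.mul_sub, Matrix.sub_mul,
      pinv_mul_self hB, Matrix.one_mul]
  have h₂ : pinv B * (pinv B)ᵀ * (B - A)ᵀ * (1 - A * pinv A) = pinv B - pinv B * A * pinv A := by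
    rw [transpose_sub, Matrix.mul_sub (pinv B * (pinv B)ᵀ), Matrix.sub_mul,
      pinv_mul_transpose_mul_transpose hB, Matrix.mul_assoc _ Aᵀ, hAP, Matrix.mul_zero, sub_zero,
      Matrix.mul_sub, Matrix.mul_one, Matrix.mul_assoc]
  rw [h₁, h₂]
  abel

theorem norm_pinv_sub_pinv_le_of_norm_pinv_le (hA : IsUnit (Aᵀ * A).det)
    (hB : IsUnit (Bᵀ * B).det) (hBA : ‖pinv B‖ ≤ ‖pinv A‖) :
    ‖pinv B - pinv A‖ ≤ √2 * ‖pinv A‖ * ‖pinv B‖ * ‖A - B‖ := by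
  have hX : ‖pinv B * (A - B) * pinv A‖ ≤ ‖pinv B‖ * ‖A - B‖ * ‖pinv A‖ :=
    (l2_opNorm_mul _ _).trans (by gcongr; exact l2_opNorm_mul _ _)
  have hY : ‖pinv B * (pinv B)ᵀ * (B - A)ᵀ‖ ≤ ‖pinv B‖ * ‖A - B‖ * ‖pinv A‖ := by
    calc ‖pinv B * (pinv B)ᵀ * (B - A)ᵀ‖ ≤ ‖pinv B‖ * ‖(pinv B)ᵀ‖ * ‖(B - A)ᵀ‖ :=
          (l2_opNorm_mul _ _).trans (by gcongr; exact l2_opNorm_mul _ _)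
      _ = ‖pinv B‖ * ‖A - B‖ * ‖pinv B‖ := by
          rw [l2_opNorm_transpose, l2_opNorm_transpose, norm_sub_rev]; ring
      _ ≤ ‖pinv B‖ * ‖A - B‖ * ‖pinv A‖ := by gcongr
  calc ‖pinv B - pinv A‖ ≤ √2 * (‖pinv B‖ * ‖A - B‖ * ‖pinv A‖) := by
        rw [pinv_sub_pinv hA hB]
        exact l2_opNorm_mul_add_mul_one_sub_le (isSymmetricProjection_toEuclideanLin_mul_pinv hA)
          hX hY
    _ = √2 * ‖pinv A‖ * ‖pinv B‖ * ‖A - B‖ := by ring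

theorem norm_pinv_sub_pinv_le (hA : IsUnit (Aᵀ * A).det) (hB : IsUnit (Bᵀ * B).det) :
    ‖pinv A - pinv B‖ ≤ √2 * ‖pinv A‖ * ‖pinv B‖ * ‖A - B‖ := by
  rcases le_total ‖pinv B‖ ‖pinv A‖ with hBA | hAB
  · rw [norm_sub_rev]
    exact norm_pinv_sub_pinv_le_of_norm_pinv_le hA hB hBA
  · calc ‖pinv A - pinv B‖ ≤ √2 * ‖pinv B‖ * ‖pinv A‖ * ‖B - A‖ :=
          norm_pinv_sub_pinv_le_of_norm_pinv_le hB hA hAB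
      _ = √2 * ‖pinv A‖ * ‖pinv B‖ * ‖A - B‖ := by rw [norm_sub_rev B]; ring

theorem norm_pinv_le_inv {S : ℝ} (hS : 0 < S) (hA : ∀ v, S * ‖v‖ ≤ ‖toEuclideanLin A v‖) :
    ‖pinv A‖ ≤ S⁻¹ := by
  have hAu := isUnit_det_transpose_mul_self ((toEuclideanLin A).injective_of_mul_norm_le hS hA)
  refine l2_opNorm_le_bound _ (by positivity) fun y => ?_
  rw [inv_mul_eq_div, le_div_iff₀' hS]
  calc S * ‖toEuclideanLin (pinv A) y‖ ≤ ‖toEuclideanLin (A * pinv A) y‖ := by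
        rw [toEuclideanLin_mul_apply]; exact hA _
    _ ≤ ‖y‖ := (isSymmetricProjection_toEuclideanLin_mul_pinv hAu).norm_apply_le y

end pinv

theorem stmt_14_general {m n : ℕ} (A B : Matrix (Fin m) (Fin n) ℝ)
    (ω d Smin : ℝ) (hSmin : 0 < Smin)
    (hAB : opNorm (A - B) ≤ ω * d)
    (hA : ∀ v : EuclideanSpace ℝ (Fin n), Smin * ‖v‖ ≤ ‖Matrix.toEuclideanLin A v‖)
    (hB : ∀ v : EuclideanSpace ℝ (Fin n), Smin * ‖v‖ ≤ ‖Matrix.toEuclideanLin B v‖) :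
    opNorm (pinv A - pinv B) ≤ Real.sqrt 2 * opNorm (pinv A) * opNorm (pinv B) * opNorm (A - B) ∧
      Real.sqrt 2 * opNorm (pinv A) * opNorm (pinv B) * opNorm (A - B) ≤
        Real.sqrt 2 * ω * d / Smin ^ 2 := by
  simp only [opNorm_eq_l2_opNorm] at hAB ⊢
  have hAu := isUnit_det_transpose_mul_self ((toEuclideanLin A).injective_of_mul_norm_le hSmin hA)
  have hBu := isUnit_det_transpose_mul_self ((toEuclideanLin B).injective_of_mul_norm_le hSmin hB)
  refine ⟨norm_pinv_sub_pinv_le hAu hBu, ?_⟩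
  calc √2 * ‖pinv A‖ * ‖pinv B‖ * ‖A - B‖ ≤ √2 * Smin⁻¹ * Smin⁻¹ * (ω * d) := by
        gcongr
        exacts [norm_pinv_le_inv hSmin hA, norm_pinv_le_inv hSmin hB]
    _ = √2 * ω * d / Smin ^ 2 := by field_simp

/-- Wedin's perturbation bound: if `‖A - B‖ ≤ ω d` and the singular values of `A`
and `B` are bounded below by `Smin > 0` (Σ_min), then
`‖A⁺ - B⁺‖ ≤ √2 ‖A⁺‖ ‖B⁺‖ ‖A - B‖ ≤ √2 ω d / Smin²`. -/
theorem stmt_14 {m n : ℕ} (A B : Matrix (Fin m) (Fin n) ℝ)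
    (ω d Smin : ℝ) (hω : 0 < ω) (hd : 0 ≤ d) (hSmin : 0 < Smin)
    (hAB : opNorm (A - B) ≤ ω * d)
    (hA : ∀ v : EuclideanSpace ℝ (Fin n), Smin * ‖v‖ ≤ ‖Matrix.toEuclideanLin A v‖)
    (hB : ∀ v : EuclideanSpace ℝ (Fin n), Smin * ‖v‖ ≤ ‖Matrix.toEuclideanLin B v‖) :
    opNorm (pinv A - pinv B) ≤ Real.sqrt 2 * opNorm (pinv A) * opNorm (pinv B) * opNorm (A - B) ∧
      Real.sqrt 2 * opNorm (pinv A) * opNorm (pinv B) * opNorm (A - B) ≤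
        Real.sqrt 2 * ω * d / Smin ^ 2 :=
  stmt_14_general A B ω d Smin hSmin hAB hA hB
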